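/- arXiv:1405.5958 — 2 statements merged into one kernel-verified Lean document; each statement's English description precedes it below -/
import Mathlib

section
/- Let R and S be commutative rings, each a normal domain (integrally closed in its fraction field). Then the product ring R × S is integrally closed in its total quotient ring. -/
/-!
Non-zero-divisors of `R × S` are exactly the pairs of non-zero-divisors, so `Q(R) × Q(S)` is a
total quotient ring of `R × S`. An element of it integral over `R × S` has components integral
over `R` and over `S`, which therefore come from `R` and `S`.
-/

open nonZeroDivisors

namespace Prod

variable {M N : Type*} [MonoidWithZero M] [MonoidWithZero N]

theorem nonZeroDivisorsLeft_eq :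
    nonZeroDivisorsLeft (M × N) = (nonZeroDivisorsLeft M).prod (nonZeroDivisorsLeft N) := by
  ext ⟨a, b⟩
  simp only [mem_nonZeroDivisorsLeft_iff, Submonoid.mem_prod, Prod.forall, Prod.mk_mul_mk,
    Prod.mk_eq_zero]
  exact ⟨fun h ↦ ⟨fun x hx ↦ (h x 0 ⟨hx, mul_zero b⟩).1, fun y hy ↦ (h 0 y ⟨mul_zero a, hy⟩).2⟩,
    fun h x y hxy ↦ ⟨h.1 x hxy.1, h.2 y hxy.2⟩⟩

theorem nonZeroDivisorsRight_eq :
    nonZeroDivisorsRight (M × N) = (nonZeroDivisorsRight M).prod (nonZeroDivisorsRight N) := by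
  ext ⟨a, b⟩
  simp only [mem_nonZeroDivisorsRight_iff, Submonoid.mem_prod, Prod.forall, Prod.mk_mul_mk,
    Prod.mk_eq_zero]
  exact ⟨fun h ↦ ⟨fun x hx ↦ (h x 0 ⟨hx, zero_mul b⟩).1, fun y hy ↦ (h 0 y ⟨zero_mul a, hy⟩).2⟩,
    fun h x y hxy ↦ ⟨h.1 x hxy.1, h.2 y hxy.2⟩⟩

theorem nonZeroDivisors_eq : (M × N)⁰ = M⁰.prod N⁰ := by
  ext x
  simp only [mem_nonZeroDivisors_iff', nonZeroDivisorsLeft_eq, nonZeroDivisorsRight_eq,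
    Submonoid.mem_prod]
  tauto

end Prod

section

variable {R S A B : Type*} [CommRing R] [CommRing S] [CommRing A] [CommRing B]
  [Algebra R A] [Algebra S B]

-- Kept local: as a global instance it would overlap with `Algebra.id` when `A = R` and `B = S`.
abbrev Prod.algebraProdMap : Algebra (R × S) (A × B) :=
  ((algebraMap R A).prodMap (algebraMap S B)).toAlgebra

attribute [local instance] Prod.algebraProdMap

instance IsLocalization.prod (M : Submonoid R) (N : Submonoid S) [IsLocalization M A]
    [IsLocalization N B] : IsLocalization (M.prod N) (A × B) where
  map_units m := Prod.isUnit_iff.mpr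
    ⟨map_units A ⟨m.1.1, (Submonoid.mem_prod.mp m.2).1⟩,
      map_units B ⟨m.1.2, (Submonoid.mem_prod.mp m.2).2⟩⟩
  surj z := by
    obtain ⟨⟨a, m⟩, ha⟩ := surj M z.1
    obtain ⟨⟨b, n⟩, hb⟩ := surj N z.2
    exact ⟨((a, b), ⟨(m, n), Submonoid.mem_prod.mpr ⟨m.2, n.2⟩⟩), Prod.ext ha hb⟩
  exists_of_eq {x y} h := by
    obtain ⟨m, hm⟩ := exists_of_eq (M := M) (congrArg Prod.fst h)
    obtain ⟨n, hn⟩ := exists_of_eq (M := N) (congrArg Prod.snd h)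
    exact ⟨⟨(m, n), Submonoid.mem_prod.mpr ⟨m.2, n.2⟩⟩, Prod.ext hm hn⟩

instance IsFractionRing.prod [IsFractionRing R A] [IsFractionRing S B] :
    IsFractionRing (R × S) (A × B) := by
  rw [IsFractionRing, Prod.nonZeroDivisors_eq]
  infer_instance

theorem IsIntegral.fst {x : A × B} (hx : IsIntegral (R × S) x) : IsIntegral R x.1 :=
  hx.map_of_comp_eq (RingHom.fst R S) (RingHom.fst A B) rfl

theorem IsIntegral.snd {x : A × B} (hx : IsIntegral (R × S) x) : IsIntegral S x.2 :=
  hx.map_of_comp_eq (RingHom.snd R S) (RingHom.snd A B) rfl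

instance IsIntegrallyClosed.prod [IsIntegrallyClosed R] [IsIntegrallyClosed S] :
    IsIntegrallyClosed (R × S) := by
  refine (isIntegrallyClosed_iff (FractionRing R × FractionRing S)).mpr fun {x} hx ↦ ?_
  obtain ⟨a, ha⟩ := IsIntegrallyClosed.isIntegral_iff.mp hx.fst
  obtain ⟨b, hb⟩ := IsIntegrallyClosed.isIntegral_iff.mp hx.snd
  exact ⟨(a, b), Prod.ext ha hb⟩

end

theorem stmt10_general (R S : Type*) [CommRing R] [IsIntegrallyClosed R]
    [CommRing S] [IsIntegrallyClosed S] :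
    ∀ x : FractionRing (R × S), IsIntegral (R × S) x →
      ∃ y : R × S, algebraMap (R × S) (FractionRing (R × S)) y = x :=
  fun _ ↦ IsIntegrallyClosed.isIntegral_iff.mp

/-- If `R` and `S` are normal domains (integrally closed in their fraction
fields), then the product ring `R × S` is integrally closed in its total
quotient ring. -/
theorem stmt10 (R S : Type*) [CommRing R] [IsDomain R] [IsIntegrallyClosed R]
    [CommRing S] [IsDomain S] [IsIntegrallyClosed S] :
    ∀ x : FractionRing (R × S), IsIntegral (R × S) x →
      ∃ y : R × S, algebraMap (R × S) (FractionRing (R × S)) y = x :=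
  stmt10_general R S
end

section
/- Let p_1,...,p_k be a regular sequence in a commutative ring R generating the ideal I. Then the associated graded ring ⊕_{n≥0} I^n/I^{n+1} is isomorphic as a graded (R/I)-algebra to the polynomial ring (R/I)[t_1,...,t_k], via the map sending t_i to the class of p_i in I/I^2. -/
/-!
Surjectivity of `(R/I)[t] → gr_I R` is clear; injectivity ("quasi-regularity") is proved by adding
the `p i` one at a time. Write `I_s` for the ideal generated by the `p i`, `i ∈ s`, and suppose
quasi-regularity holds on `s` and `p a` is a nonzerodivisor modulo `I_s`. Then `p a` is a
nonzerodivisor modulo every power `I_s^n`. If a form `F = X_a Q + P`, with `P` free of `X_a`,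
vanishes at `p`, then `p a · Q(p) = -P(p) ∈ I_s^(deg F)`, so `Q(p) ∈ I_s^(deg F)` and
`Q(p) = H(p)` for a form `H` in the old variables. Quasi-regularity on `s`, applied to
`p a · H + P`, puts the coefficients of `P` in `I_{insert a s}`, and induction on the degree does
the same for `Q`.
-/

open MvPolynomial Ideal

section CommSemiring

variable {σ R : Type*} [CommSemiring R] {s : Set σ}

lemma mem_supported_iff_forall_mem_support {F : MvPolynomial σ R} :
    F ∈ supported R s ↔ ∀ m ∈ F.support, ∀ i ∈ m.support, i ∈ s := by
  simp only [mem_supported, Set.subset_def, Finset.mem_coe, mem_vars_iff_mem_support]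
  grind

lemma C_mul_mem_coeffsIn {K : Ideal R} {c : R} (hc : c ∈ K) (G : MvPolynomial σ R) :
    C c * G ∈ coeffsIn σ K :=
  fun m => by rw [coeff_C_mul]; exact K.mul_mem_right _ hc

lemma coeff_modMonomial_single (F : MvPolynomial σ R) (a : σ) (m : σ →₀ ℕ) :
    (F.modMonomial (Finsupp.single a 1)).coeff m = if m a = 0 then F.coeff m else 0 := by
  split_ifs with h
  · exact coeff_modMonomial_of_not_le F (by simp [Finsupp.single_le_iff, h])
  · exact coeff_modMonomial_of_le F (by simp [Finsupp.single_le_iff]; omega)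

lemma exists_X_mul_add_of_mem_supported_insert {a : σ} {d : ℕ} {F : MvPolynomial σ R}
    (hFs : F ∈ supported R (insert a s)) (hF : F.IsHomogeneous (d + 1)) :
    ∃ Q P : MvPolynomial σ R, Q ∈ supported R (insert a s) ∧ Q.IsHomogeneous d ∧
      P ∈ supported R s ∧ P.IsHomogeneous (d + 1) ∧ X a * Q + P = F := by
  rw [mem_supported_iff_forall_mem_support] at hFs
  refine ⟨F.divMonomial (Finsupp.single a 1), F.modMonomial (Finsupp.single a 1), ?_, ?_, ?_, ?_,
    divMonomial_add_modMonomial_single F a⟩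
  · rw [mem_supported_iff_forall_mem_support]
    intro m hm i hi
    rw [mem_support_iff, coeff_divMonomial] at hm
    refine hFs _ (mem_support_iff.2 hm) i ?_
    rw [Finsupp.mem_support_iff] at hi ⊢
    simp only [Finsupp.add_apply]
    omega
  · intro m hm
    rw [coeff_divMonomial] at hm
    have hdeg := hF hm
    rw [map_add, Finsupp.weight_single, Pi.one_apply, smul_eq_mul, mul_one] at hdeg
    omega
  · rw [mem_supported_iff_forall_mem_support]
    intro m hm i hi
    rw [mem_support_iff, coeff_modMonomial_single] at hm
    split_ifs at hm with ha
    · exact (hFs _ (mem_support_iff.2 hm) i hi).resolve_left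
        fun hia => Finsupp.mem_support_iff.1 hi (hia ▸ ha)
    · exact absurd rfl hm
  · intro m hm
    rw [coeff_modMonomial_single] at hm
    split_ifs at hm
    · exact hF hm
    · exact absurd rfl hm

variable (p : σ → R)

lemma eval_mem_mul_pow {K : Ideal R} {d : ℕ} {F : MvPolynomial σ R} (hFs : F ∈ supported R s)
    (hF : F.IsHomogeneous d) (hK : F ∈ coeffsIn σ K) :
    eval p F ∈ K * span (p '' s) ^ d := by
  rw [eval_eq]
  refine sum_mem fun m hm => mul_mem_mul (hK m) ?_
  rw [hF.degree_eq_sum_deg_support hm, ← Finset.prod_pow_eq_pow_sum]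
  exact prod_mem_prod fun i hi => pow_mem_pow
    (subset_span (Set.mem_image_of_mem p
      (mem_supported_iff_forall_mem_support.1 hFs m hm i hi))) _

lemma eval_mem_pow {d : ℕ} {F : MvPolynomial σ R} (hFs : F ∈ supported R s)
    (hF : F.IsHomogeneous d) : eval p F ∈ span (p '' s) ^ d := by
  rw [← one_mul (span (p '' s) ^ d), one_eq_top]
  exact eval_mem_mul_pow p hFs hF fun _ => Submodule.mem_top

lemma exists_isHomogeneous_eval_eq_of_mem_pow {d : ℕ} {x : R} (hx : x ∈ span (p '' s) ^ d) :
    ∃ F ∈ supported R s, F.IsHomogeneous d ∧ eval p F = x := by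
  rw [Set.image_eq_range, mem_span_pow_iff_exists_isHomogeneous] at hx
  obtain ⟨F, hF, rfl⟩ := hx
  refine ⟨rename (↑) F, ?_, hF.rename_isHomogeneous, ?_⟩
  · rw [supported_eq_range_rename]
    exact ⟨F, rfl⟩
  · exact eval_rename _ _ _

lemma exists_isHomogeneous_eval_eq_of_mem_mul_pow {K : Ideal R} {d : ℕ} {x : R}
    (hx : x ∈ K * span (p '' s) ^ d) :
    ∃ F ∈ supported R s, F.IsHomogeneous d ∧ F ∈ coeffsIn σ K ∧ eval p F = x := by
  refine Submodule.mul_induction_on hx (fun c hc y hy => ?_) ?_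
  · obtain ⟨G, hGs, hG, rfl⟩ := exists_isHomogeneous_eval_eq_of_mem_pow p hy
    exact ⟨C c * G, Subalgebra.mul_mem _ (Subalgebra.algebraMap_mem _ c) hGs, hG.C_mul c,
      C_mul_mem_coeffsIn hc G, by simp⟩
  · rintro _ _ ⟨F, hFs, hF, hFK, rfl⟩ ⟨G, hGs, hG, hGK, rfl⟩
    exact ⟨F + G, add_mem hFs hGs, hF.add hG, add_mem hFK hGK, map_add _ _ _⟩

end CommSemiring

section CommRing

variable {σ R : Type*} [CommRing R] (p : σ → R) {s : Set σ}

lemma mem_coeffsIn_of_eval_mem_pow_succ {d : ℕ}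
    (hker : ∀ G ∈ supported R s, G.IsHomogeneous d → eval p G = 0 →
      G ∈ coeffsIn σ (span (p '' s)))
    {F : MvPolynomial σ R} (hFs : F ∈ supported R s) (hF : F.IsHomogeneous d)
    (h : eval p F ∈ span (p '' s) ^ (d + 1)) : F ∈ coeffsIn σ (span (p '' s)) := by
  rw [pow_succ'] at h
  obtain ⟨G, hGs, hG, hGK, hGe⟩ := exists_isHomogeneous_eval_eq_of_mem_mul_pow p h
  have hFG := hker (F - G) (sub_mem hFs hGs) (hF.sub hG) (by rw [map_sub, hGe, sub_self])
  simpa using add_mem hFG hGK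

/-- Degreewise injectivity of `(R/I)[X_i : i ∈ s] → gr_I R`, `X_i ↦ p i + I²`, where
`I = span (p '' s)`. -/
def IsQuasiRegularOn (s : Set σ) : Prop :=
  ∀ ⦃d : ℕ⦄ ⦃F : MvPolynomial σ R⦄, F ∈ supported R s → F.IsHomogeneous d →
    eval p F ∈ span (p '' s) ^ (d + 1) → F ∈ coeffsIn σ (span (p '' s))

lemma isQuasiRegularOn_empty : IsQuasiRegularOn p ∅ := by
  intro d F hFs _ h
  rw [supported_empty, Algebra.mem_bot] at hFs
  obtain ⟨c, rfl⟩ := hFs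
  simp only [Set.image_empty, Submodule.span_empty, Submodule.bot_pow (Nat.succ_ne_zero d),
    algebraMap_eq, eval_C, Submodule.mem_bot] at h
  simp [h]

variable {p} in
lemma IsQuasiRegularOn.mem_pow_of_mul_mem_pow (hp : IsQuasiRegularOn p s) {q : R}
    (hq : ∀ z, q * z ∈ span (p '' s) → z ∈ span (p '' s)) :
    ∀ (d : ℕ) {z : R}, q * z ∈ span (p '' s) ^ d → z ∈ span (p '' s) ^ d
  | 0, _, _ => by simp
  | d + 1, z, h => by
    obtain ⟨W, hWs, hW, rfl⟩ := exists_isHomogeneous_eval_eq_of_mem_pow p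
      (hp.mem_pow_of_mul_mem_pow hq d (pow_le_pow_right (Nat.le_succ d) h))
    have hqW : C q * W ∈ coeffsIn σ (span (p '' s)) := hp
      (Subalgebra.mul_mem _ (Subalgebra.algebraMap_mem _ q) hWs) (hW.C_mul q) (by simpa using h)
    have hWK : W ∈ coeffsIn σ (span (p '' s)) := fun m => hq _ (by simpa using hqW m)
    rw [pow_succ']
    exact eval_mem_mul_pow p hWs hW hWK

variable {p} in
theorem isQuasiRegularOn_insert (hp : IsQuasiRegularOn p s) {a : σ}
    (ha : ∀ z, p a * z ∈ span (p '' s) → z ∈ span (p '' s)) :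
    IsQuasiRegularOn p (insert a s) := by
  have hmono : span (p '' s) ≤ span (p '' insert a s) :=
    span_mono (Set.image_mono (Set.subset_insert a s))
  have hpa : p a ∈ span (p '' insert a s) :=
    subset_span (Set.mem_image_of_mem p (Set.mem_insert a s))
  suffices hker : ∀ d, ∀ F ∈ supported R (insert a s), F.IsHomogeneous d → eval p F = 0 →
      F ∈ coeffsIn σ (span (p '' insert a s)) from
    fun d _ hFs hF h => mem_coeffsIn_of_eval_mem_pow_succ p (hker d) hFs hF h
  intro d
  induction d with
  | zero =>
    intro F _ hF he
    rw [totalDegree_eq_zero_iff_eq_C.1 ((totalDegree_zero_iff_isHomogeneous σ).2 hF)] at he ⊢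
    rw [eval_C] at he
    simp [he]
  | succ d ih =>
    intro F hFs hF he
    obtain ⟨Q, P, hQs, hQ, hPs, hP, rfl⟩ := exists_X_mul_add_of_mem_supported_insert hFs hF
    have hsum : p a * eval p Q + eval p P = 0 := by simpa using he
    have hQJ : eval p Q ∈ span (p '' s) ^ (d + 1) := by
      refine hp.mem_pow_of_mul_mem_pow ha (d + 1) ?_
      rw [eq_neg_of_add_eq_zero_left hsum]
      exact neg_mem (eval_mem_pow p hPs hP)
    have hQK := mem_coeffsIn_of_eval_mem_pow_succ p ih hQs hQ (pow_right_mono hmono _ hQJ)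
    obtain ⟨H, hHs, hH, hHe⟩ := exists_isHomogeneous_eval_eq_of_mem_pow p hQJ
    have hHP : C (p a) * H + P ∈ coeffsIn σ (span (p '' s)) :=
      hp (add_mem (Subalgebra.mul_mem _ (Subalgebra.algebraMap_mem _ _) hHs) hPs)
        ((hH.C_mul _).add hP) (by simp [hHe, hsum])
    have hHP' : C (p a) * H + P ∈ coeffsIn σ (span (p '' insert a s)) := fun m => hmono (hHP m)
    have hPK : P ∈ coeffsIn σ (span (p '' insert a s)) := by
      simpa using sub_mem hHP' (C_mul_mem_coeffsIn hpa H)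
    exact add_mem (X_mul_mem_coeffsIn.2 hQK) hPK

end CommRing

theorem isQuasiRegularOn_univ_of_regular {R : Type*} [CommRing R] {k : ℕ} {p : Fin k → R}
    (hreg : ∀ i : Fin k, ∀ f : R,
      p i * f ∈ span (p '' {j | j < i}) → f ∈ span (p '' {j | j < i})) :
    IsQuasiRegularOn p Set.univ := by
  have hinit : ∀ j ≤ k, IsQuasiRegularOn p {i : Fin k | (i : ℕ) < j} := by
    intro j hj
    induction j with
    | zero => simpa using isQuasiRegularOn_empty p
    | succ j ih =>
      have hset :
          {i : Fin k | (i : ℕ) < j + 1} = insert ⟨j, hj⟩ {i : Fin k | i < ⟨j, hj⟩} := by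
        ext i
        simp only [Order.lt_add_one_iff, Set.mem_ofPred_eq, Fin.lt_def, Set.mem_insert_iff,
          Fin.ext_iff]
        omega
      rw [hset]
      exact isQuasiRegularOn_insert (ih (by omega)) (hreg ⟨j, hj⟩)
  simpa using hinit k le_rfl

theorem stmt12_general (R : Type*) [CommRing R] (k : ℕ) (p : Fin k → R)
    (hreg : ∀ i : Fin k, ∀ f : R,
      p i * f ∈ Ideal.span (p '' {j | j < i}) → f ∈ Ideal.span (p '' {j | j < i})) :
    (∀ (d : ℕ) (x : R), x ∈ Ideal.span (Set.range p) ^ d →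
      ∃ F : MvPolynomial (Fin k) R, F.IsHomogeneous d ∧ MvPolynomial.eval p F = x) ∧
    (∀ (d : ℕ) (F : MvPolynomial (Fin k) R), F.IsHomogeneous d →
      (MvPolynomial.eval p F ∈ Ideal.span (Set.range p) ^ (d + 1) ↔
        ∀ m : Fin k →₀ ℕ, F.coeff m ∈ Ideal.span (Set.range p))) := by
  refine ⟨fun d x hx => (mem_span_pow_iff_exists_isHomogeneous p x).1 hx, fun d F hF => ?_⟩
  have hFs : F ∈ supported R Set.univ := by simp [supported_univ]
  rw [← Set.image_univ]
  exact ⟨fun h => isQuasiRegularOn_univ_of_regular hreg hFs hF h,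
    fun h => pow_succ' (span (p '' Set.univ)) d ▸ eval_mem_mul_pow p hFs hF h⟩

/-- Degreewise form of the isomorphism `(R/I)[t_1,…,t_k] ≅ ⊕ₙ Iⁿ/Iⁿ⁺¹` for a
regular sequence `p_1,…,p_k` generating `I`, given by `t_i ↦ p_i + I²`:
the evaluation map `F ↦ F(p_1,…,p_k)` sends degree-`d` homogeneous polynomials
onto `I^d`, and it lands in `I^{d+1}` exactly when all coefficients of `F`
lie in `I` (so the induced map on `I^d/I^{d+1}` is an isomorphism from the
degree-`d` part of `(R/I)[t_1,…,t_k]`). -/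
theorem stmt12 (R : Type*) [CommRing R] [IsNoetherianRing R] (k : ℕ) (p : Fin k → R)
    (htop : Ideal.span (Set.range p) ≠ ⊤)
    (hreg : ∀ i : Fin k, ∀ f : R,
      p i * f ∈ Ideal.span (p '' {j | j < i}) → f ∈ Ideal.span (p '' {j | j < i})) :
    (∀ (d : ℕ) (x : R), x ∈ Ideal.span (Set.range p) ^ d →
      ∃ F : MvPolynomial (Fin k) R, F.IsHomogeneous d ∧ MvPolynomial.eval p F = x) ∧
    (∀ (d : ℕ) (F : MvPolynomial (Fin k) R), F.IsHomogeneous d →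
      (MvPolynomial.eval p F ∈ Ideal.span (Set.range p) ^ (d + 1) ↔
        ∀ m : Fin k →₀ ℕ, F.coeff m ∈ Ideal.span (Set.range p))) :=
  stmt12_general R k p hreg
end
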